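/- arXiv:0904.4190 — 4 statements merged into one kernel-verified Lean document; each statement's English description precedes it below -/
import Mathlib

section
/- Let V₁, V₂, V₃ ∈ M^{4×3} be given by V₁ with rows (1,0,0),(0,1,0),(0,0,0),(0,0,0); V₂ with rows (0,1,0),(0,0,0),(0,0,1),(0,0,0); V₃ with rows (0,0,0),(0,0,0),(0,1,0),(1,1,1). For α = (α₁,α₂,α₃) ∈ ℝ³ with at least two of α₁,α₂,α₃ nonzero, the matrix α₁V₁ + α₂V₂ + α₃V₃ has rank 3. -/
open MeasureTheory Real

noncomputable section

/-- The unit cube in `ℝⁿ`. -/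
def cube (n : ℕ) : Set (Fin n → ℝ) := Set.Icc 0 1

/-- `ℤⁿ`-periodicity of a field on `ℝⁿ`. -/
def IsZnPeriodic {n : ℕ} {E : Type*} (B : (Fin n → ℝ) → E) : Prop :=
  ∀ (x : Fin n → ℝ) (k : Fin n → ℤ), B (x + fun i => (k i : ℝ)) = B x

/-- Entrywise smoothness of a matrix field. -/
def SmoothField {m n : ℕ} (B : (Fin n → ℝ) → Matrix (Fin m) (Fin n) ℝ) : Prop :=
  ∀ i j, ContDiff ℝ (⊤ : ℕ∞) (fun x => B x i j)

/-- Row-wise divergence-freeness: `∑ⱼ ∂ⱼ B i j = 0` for every row `i`. -/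
def DivFree {m n : ℕ} (B : (Fin n → ℝ) → Matrix (Fin m) (Fin n) ℝ) : Prop :=
  ∀ (i : Fin m) (x : Fin n → ℝ),
    ∑ j : Fin n, fderiv ℝ (fun y => B y i j) x (Pi.single j 1) = 0

/-- Entrywise mean of a matrix field over the unit cube. -/
def meanMatrix {m n : ℕ} (B : (Fin n → ℝ) → Matrix (Fin m) (Fin n) ℝ) :
    Matrix (Fin m) (Fin n) ℝ :=
  Matrix.of fun i j => ∫ x in cube n, B x i j

/-- `S`-quasiconvexity: quasiconvexity with respect to divergence free fields. -/
def SQuasiconvex {m n : ℕ} (f : Matrix (Fin m) (Fin n) ℝ → ℝ) : Prop :=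
  ∀ B : (Fin n → ℝ) → Matrix (Fin m) (Fin n) ℝ,
    SmoothField B → IsZnPeriodic B → DivFree B →
      f (meanMatrix B) ≤ ∫ x in cube n, f (B x)

end

noncomputable section
/-- Šverák matrices in `M^{4×3}`. -/
def V1 : Matrix (Fin 4) (Fin 3) ℝ := !![1,0,0; 0,1,0; 0,0,0; 0,0,0]
def V2 : Matrix (Fin 4) (Fin 3) ℝ := !![0,1,0; 0,0,0; 0,0,1; 0,0,0]
def V3 : Matrix (Fin 4) (Fin 3) ℝ := !![0,0,0; 0,0,0; 0,1,0; 1,1,1]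
end



lemma rank_eq_three_of_submatrix {M : Matrix (Fin 4) (Fin 3) ℝ} (f : Fin 3 → Fin 4)
    (hd : (M.submatrix f id).det ≠ 0) : M.rank = 3 := by
  refine le_antisymm (M.rank_le_width) ?_
  have h1 : M.submatrix f id = ((1 : Matrix (Fin 4) (Fin 4) ℝ).submatrix f id) * M := by
    have := Matrix.submatrix_mul (1 : Matrix (Fin 4) (Fin 4) ℝ) M f id id Function.bijective_id
    simpa using this
  have h2 : (M.submatrix f id).rank = 3 := by
    rw [Matrix.rank_of_isUnit _ ((Matrix.isUnit_iff_isUnit_det _).mpr hd.isUnit)]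
    simp
  calc (3 : ℕ) = (M.submatrix f id).rank := h2.symm
    _ ≤ M.rank := by rw [h1]; exact Matrix.rank_mul_le_right _ _

theorem sverak_combination_rank_three (a1 a2 a3 : ℝ)
    (h : (a1 ≠ 0 ∧ a2 ≠ 0) ∨ (a1 ≠ 0 ∧ a3 ≠ 0) ∨ (a2 ≠ 0 ∧ a3 ≠ 0)) :
    (a1 • V1 + a2 • V2 + a3 • V3).rank = 3 := by
  have h12 : a1 ≠ 0 → a2 ≠ 0 → (a1 • V1 + a2 • V2 + a3 • V3).rank = 3 := by
    intro h1 h2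
    apply rank_eq_three_of_submatrix ![0,1,2]
    rw [Matrix.det_fin_three]
    simp [Matrix.det_fin_three, V1, V2, V3, Matrix.add_apply, Matrix.smul_apply]
    exact ⟨h1, h2⟩
  have h13 : a1 ≠ 0 → a3 ≠ 0 → (a1 • V1 + a2 • V2 + a3 • V3).rank = 3 := by
    intro h1 h3
    apply rank_eq_three_of_submatrix ![0,1,3]
    rw [Matrix.det_fin_three]
    simp [Matrix.det_fin_three, V1, V2, V3, Matrix.add_apply, Matrix.smul_apply]
    exact ⟨h1, h3⟩
  rcases h with ⟨h1, h2⟩ | ⟨h1, h3⟩ | ⟨h2, h3⟩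
  · exact h12 h1 h2
  · exact h13 h1 h3
  · rcases eq_or_ne a1 0 with h1 | h1
    · apply rank_eq_three_of_submatrix ![0,2,3]
      rw [Matrix.det_fin_three]
      simp [h1, Matrix.det_fin_three, V1, V2, V3, Matrix.add_apply, Matrix.smul_apply]
      exact ⟨h2, h3⟩
    · exact h12 h1 h2
end

section
/- Let V₁, V₂, V₃ ∈ M^{4×3} be as in the Šverák-type construction (V₁ rows (1,0,0),(0,1,0),(0,0,0),(0,0,0); V₂ rows (0,1,0),(0,0,0),(0,0,1),(0,0,0); V₃ rows (0,0,0),(0,0,0),(0,1,0),(1,1,1)), let L = span{V₁,V₂,V₃} and define f : L → ℝ by f(η₁V₁+η₂V₂+η₃V₃) = −η₁η₂η₃. Then for every A ∈ L and every V ∈ L with rank(V) ≤ 2, the function t ↦ f(A + tV) is affine (in particular convex). -/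
open MeasureTheory Real

lemma rank_ge_of_det_ne
    (M : Matrix (Fin 4) (Fin 3) ℝ) (P : Matrix (Fin 3) (Fin 4) ℝ)
    (h : (P * M).det ≠ 0) : 3 ≤ M.rank := by
  have hu : IsUnit (P * M) := (Matrix.isUnit_iff_isUnit_det _).mpr (isUnit_iff_ne_zero.mpr h)
  have := Matrix.rank_mul_le_right P M
  rw [Matrix.rank_of_isUnit _ hu] at this
  simpa using this

theorem f_affine_on_rank_two_lines_in_L
    (f : Matrix (Fin 4) (Fin 3) ℝ → ℝ)
    (hf : ∀ e1 e2 e3 : ℝ, f (e1 • V1 + e2 • V2 + e3 • V3) = -(e1 * e2 * e3))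
    (a1 a2 a3 b1 b2 b3 : ℝ)
    (hrank : (b1 • V1 + b2 • V2 + b3 • V3).rank ≤ 2) :
    ∃ c d : ℝ, ∀ t : ℝ,
      f ((a1 • V1 + a2 • V2 + a3 • V3) + t • (b1 • V1 + b2 • V2 + b3 • V3))
        = c * t + d := by
  set M := b1 • V1 + b2 • V2 + b3 • V3 with hM
  have h12 : b1 * b2 = 0 := by
    by_contra h
    have h1 : b1 ≠ 0 := fun h0 => h (by rw [h0]; ring)
    have h2 : b2 ≠ 0 := fun h0 => h (by rw [h0]; ring)
    have : 3 ≤ M.rank := by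
      apply rank_ge_of_det_ne M !![1,0,0,0; 0,1,0,0; 0,0,1,0]
      simp [hM, Matrix.det_fin_three, Matrix.mul_apply, Fin.sum_univ_succ, V1, V2, V3]
      exact ⟨h1, h2⟩
    omega
  have h13 : b1 * b3 = 0 := by
    by_contra h
    have h1 : b1 ≠ 0 := fun h0 => h (by rw [h0]; ring)
    have h3 : b3 ≠ 0 := fun h0 => h (by rw [h0]; ring)
    have : 3 ≤ M.rank := by
      apply rank_ge_of_det_ne M !![1,0,0,0; 0,1,0,0; 0,0,0,1]
      simp [hM, Matrix.det_fin_three, Matrix.mul_apply, Fin.sum_univ_succ, V1, V2, V3]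
      exact ⟨h1, h3⟩
    omega
  have h23 : b2 * b3 = 0 := by
    by_contra h
    have h2 : b2 ≠ 0 := fun h0 => h (by rw [h0]; ring)
    have h3 : b3 ≠ 0 := fun h0 => h (by rw [h0]; ring)
    have h1 : b1 = 0 := by
      by_contra h1
      exact (mul_ne_zero h1 h2) h12
    have : 3 ≤ M.rank := by
      apply rank_ge_of_det_ne M !![1,0,0,0; 0,0,1,0; 0,0,0,1]
      simp [hM, h1, Matrix.det_fin_three, Matrix.mul_apply, Fin.sum_univ_succ, V1, V2, V3]
      exact ⟨h2, h3⟩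
    omega
  refine ⟨-(b1*a2*a3 + a1*b2*a3 + a1*a2*b3), -(a1*a2*a3), fun t => ?_⟩
  have : (a1 • V1 + a2 • V2 + a3 • V3) + t • M
      = (a1 + t*b1) • V1 + (a2 + t*b2) • V2 + (a3 + t*b3) • V3 := by
    rw [hM]; module
  rw [this, hf]
  linear_combination (-(a3)*t^2 - b3*t^3) * h12 - a2*t^2 * h13 - a1*t^2 * h23
end

section
/- Define B : ℝ³ → M^{4×3} by B(x) = cos(2πx₃)V₁ + cos(2πx₁)V₂ + cos(2π(x₁−x₃))V₃, where V₁ has rows (1,0,0),(0,1,0),(0,0,0),(0,0,0); V₂ has rows (0,1,0),(0,0,0),(0,0,1),(0,0,0); V₃ has rows (0,0,0),(0,0,0),(0,1,0),(1,1,1). Then B is smooth, ℤ³-periodic, and Div B = 0, i.e., Σ_{j=1}^{3} ∂_j B_{ij}(x) = 0 for each row i = 1,…,4 and all x ∈ ℝ³. -/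
open MeasureTheory Real

noncomputable def Bfield (x : Fin 3 → ℝ) : Matrix (Fin 4) (Fin 3) ℝ :=
  Real.cos (2 * Real.pi * x 2) • V1 + Real.cos (2 * Real.pi * x 0) • V2 +
    Real.cos (2 * Real.pi * (x 0 - x 2)) • V3


lemma entry_eq (x : Fin 3 → ℝ) (i : Fin 4) (j : Fin 3) :
    Bfield x i j = Real.cos (2 * π * x 2) * V1 i j + Real.cos (2 * π * x 0) * V2 i j
      + Real.cos (2 * π * (x 0 - x 2)) * V3 i j := by
  simp [Bfield, Matrix.add_apply, Matrix.smul_apply, smul_eq_mul]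

lemma entry_hasFDeriv (x : Fin 3 → ℝ) (i : Fin 4) (j : Fin 3) :
    HasFDerivAt (fun y => Bfield y i j)
      (((-Real.sin (2 * π * x 2) • ((2*π) • (ContinuousLinearMap.proj 2 : (Fin 3 → ℝ) →L[ℝ] ℝ))).smulRight (V1 i j)) +
       ((-Real.sin (2 * π * x 0) • ((2*π) • (ContinuousLinearMap.proj 0 : (Fin 3 → ℝ) →L[ℝ] ℝ))).smulRight (V2 i j)) +
       ((-Real.sin (2 * π * (x 0 - x 2)) • ((2*π) • ((ContinuousLinearMap.proj 0 : (Fin 3 → ℝ) →L[ℝ] ℝ) - ContinuousLinearMap.proj 2))).smulRight (V3 i j))) x := by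
  have h2 : HasFDerivAt (fun y : Fin 3 → ℝ => 2 * π * y 2)
      ((2*π) • (ContinuousLinearMap.proj 2 : (Fin 3 → ℝ) →L[ℝ] ℝ)) x :=
    ((ContinuousLinearMap.proj 2 : (Fin 3 → ℝ) →L[ℝ] ℝ).hasFDerivAt).const_mul _
  have h0 : HasFDerivAt (fun y : Fin 3 → ℝ => 2 * π * y 0)
      ((2*π) • (ContinuousLinearMap.proj 0 : (Fin 3 → ℝ) →L[ℝ] ℝ)) x :=
    ((ContinuousLinearMap.proj 0 : (Fin 3 → ℝ) →L[ℝ] ℝ).hasFDerivAt).const_mul _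
  have h02 : HasFDerivAt (fun y : Fin 3 → ℝ => 2 * π * (y 0 - y 2))
      ((2*π) • ((ContinuousLinearMap.proj 0 : (Fin 3 → ℝ) →L[ℝ] ℝ) - ContinuousLinearMap.proj 2)) x :=
    (((ContinuousLinearMap.proj 0 : (Fin 3 → ℝ) →L[ℝ] ℝ).hasFDerivAt).sub
      ((ContinuousLinearMap.proj 2 : (Fin 3 → ℝ) →L[ℝ] ℝ).hasFDerivAt)).const_mul _
  have := ((h2.cos.mul_const (V1 i j)).add (h0.cos.mul_const (V2 i j))).add
    (h02.cos.mul_const (V3 i j))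
  have heq : (fun y => Bfield y i j) = fun y => Real.cos (2 * π * y 2) * V1 i j
      + Real.cos (2 * π * y 0) * V2 i j + Real.cos (2 * π * (y 0 - y 2)) * V3 i j :=
    funext fun y => entry_eq y i j
  rw [heq]
  refine HasFDerivAt.congr_fderiv (by exact this) ?_
  ext v
  simp [ContinuousLinearMap.smulRight_apply]
  ring

theorem Bfield_smooth_periodic_divfree :
    SmoothField Bfield ∧ IsZnPeriodic Bfield ∧ DivFree Bfield := by
  refine ⟨?_, ?_, ?_⟩
  · intro i j
    have c2 : ContDiff ℝ (⊤ : ℕ∞) (fun y : Fin 3 → ℝ => Real.cos (2 * π * y 2)) :=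
      Real.contDiff_cos.comp (contDiff_const.mul (contDiff_apply ℝ ℝ 2))
    have c0 : ContDiff ℝ (⊤ : ℕ∞) (fun y : Fin 3 → ℝ => Real.cos (2 * π * y 0)) :=
      Real.contDiff_cos.comp (contDiff_const.mul (contDiff_apply ℝ ℝ 0))
    have c02 : ContDiff ℝ (⊤ : ℕ∞) (fun y : Fin 3 → ℝ => Real.cos (2 * π * (y 0 - y 2))) :=
      Real.contDiff_cos.comp (contDiff_const.mul ((contDiff_apply ℝ ℝ 0).sub (contDiff_apply ℝ ℝ 2)))
    have : ContDiff ℝ (⊤ : ℕ∞) (fun x : Fin 3 → ℝ => Real.cos (2 * π * x 2) * V1 i j +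
        Real.cos (2 * π * x 0) * V2 i j + Real.cos (2 * π * (x 0 - x 2)) * V3 i j) :=
      ((c2.mul contDiff_const).add (c0.mul contDiff_const)).add (c02.mul contDiff_const)
    simpa [entry_eq] using this
  · intro x k
    have e1 : Real.cos (2 * π * (x 2 + (k 2 : ℝ))) = Real.cos (2 * π * x 2) := by
      rw [show 2 * π * (x 2 + (k 2 : ℝ)) = 2 * π * x 2 + (k 2 : ℝ) * (2 * π) by ring]
      exact Real.cos_add_int_mul_two_pi _ _
    have e2 : Real.cos (2 * π * (x 0 + (k 0 : ℝ))) = Real.cos (2 * π * x 0) := by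
      rw [show 2 * π * (x 0 + (k 0 : ℝ)) = 2 * π * x 0 + (k 0 : ℝ) * (2 * π) by ring]
      exact Real.cos_add_int_mul_two_pi _ _
    have e3 : Real.cos (2 * π * (x 0 + (k 0 : ℝ) - (x 2 + (k 2 : ℝ)))) =
        Real.cos (2 * π * (x 0 - x 2)) := by
      rw [show 2 * π * (x 0 + (k 0 : ℝ) - (x 2 + (k 2 : ℝ))) =
          2 * π * (x 0 - x 2) + ((k 0 - k 2 : ℤ) : ℝ) * (2 * π) by push_cast; ring]
      exact Real.cos_add_int_mul_two_pi _ _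
    simp [Bfield, Pi.add_apply, e1, e2, e3]
  · intro i x
    have key : ∀ j, fderiv ℝ (fun y => Bfield y i j) x (Pi.single j 1) =
        (-Real.sin (2 * π * x 2) * (2*π) * (Pi.single j 1 : Fin 3 → ℝ) 2) * V1 i j +
        (-Real.sin (2 * π * x 0) * (2*π) * (Pi.single j 1 : Fin 3 → ℝ) 0) * V2 i j +
        (-Real.sin (2 * π * (x 0 - x 2)) * (2*π) *
          ((Pi.single j 1 : Fin 3 → ℝ) 0 - (Pi.single j 1 : Fin 3 → ℝ) 2)) * V3 i j := by
      intro j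
      rw [(entry_hasFDeriv x i j).fderiv]
      simp [ContinuousLinearMap.smulRight_apply, ContinuousLinearMap.proj_apply]
      ring
    rw [Fin.sum_univ_three]
    simp only [key]
    fin_cases i <;>
      simp [V1, V2, V3, Pi.single_apply, Matrix.vecHead, Matrix.vecTail, Function.comp]
end

section
/- With V₁⁽⁴⁾, V₂⁽⁴⁾, V₃⁽⁴⁾ ∈ M^{5×4} as above, for every α = (α₁,α₂,α₃) ∈ ℝ³ with at least two of α₁,α₂,α₃ nonzero, the matrix M⁽⁴⁾(α) = α₁V₁⁽⁴⁾ + α₂V₂⁽⁴⁾ + α₃V₃⁽⁴⁾ has rank 4. -/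
open MeasureTheory Real

noncomputable section
def W1 : Matrix (Fin 5) (Fin 4) ℝ :=
  !![1,0,0,0; 0,1,0,0; 0,0,0,0; 0,0,0,1; 0,0,0,0]
def W2 : Matrix (Fin 5) (Fin 4) ℝ :=
  !![0,1,0,0; 0,0,0,0; 0,0,1,0; 0,0,0,0; 0,0,0,0]
def W3 : Matrix (Fin 5) (Fin 4) ℝ :=
  !![0,0,0,0; 0,0,0,0; 0,1,0,0; 1,1,1,0; 0,0,0,1]
end


lemma rank_eq_four_of_minor (M : Matrix (Fin 5) (Fin 4) ℝ)
    (P : Matrix (Fin 4) (Fin 5) ℝ) (hd : (P * M).det ≠ 0) : M.rank = 4 := by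
  refine le_antisymm (M.rank_le_width) ?_
  have h4 : (P * M).rank = 4 := by
    rw [Matrix.rank_of_isUnit _ ((Matrix.isUnit_iff_isUnit_det _).mpr (isUnit_iff_ne_zero.mpr hd))]
    simp
  calc (4 : ℕ) = (P * M).rank := h4.symm
    _ ≤ M.rank := Matrix.rank_mul_le_right P M

lemma Mlit (a1 a2 a3 : ℝ) :
    (a1 • W1 + a2 • W2 + a3 • W3) =
      Matrix.of ![![a1,a2,0,0], ![0,a1,0,0], ![0,a3,a2,0], ![a3,a3,a3,a1], ![0,0,0,a3]] := by
  ext i j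
  fin_cases i <;> fin_cases j <;> norm_num [W1, W2, W3]

lemma det4 (A : Matrix (Fin 4) (Fin 4) ℝ) : A.det =
    A 0 0 * (A 1 1 * (A 2 2 * A 3 3 - A 2 3 * A 3 2) - A 1 2 * (A 2 1 * A 3 3 - A 2 3 * A 3 1)
      + A 1 3 * (A 2 1 * A 3 2 - A 2 2 * A 3 1))
  - A 0 1 * (A 1 0 * (A 2 2 * A 3 3 - A 2 3 * A 3 2) - A 1 2 * (A 2 0 * A 3 3 - A 2 3 * A 3 0)
      + A 1 3 * (A 2 0 * A 3 2 - A 2 2 * A 3 0))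
  + A 0 2 * (A 1 0 * (A 2 1 * A 3 3 - A 2 3 * A 3 1) - A 1 1 * (A 2 0 * A 3 3 - A 2 3 * A 3 0)
      + A 1 3 * (A 2 0 * A 3 1 - A 2 1 * A 3 0))
  - A 0 3 * (A 1 0 * (A 2 1 * A 3 2 - A 2 2 * A 3 1) - A 1 1 * (A 2 0 * A 3 2 - A 2 2 * A 3 0)
      + A 1 2 * (A 2 0 * A 3 1 - A 2 1 * A 3 0)) := by
  rw [Matrix.det_succ_row_zero]
  simp [Fin.sum_univ_succ, Matrix.det_fin_three, Matrix.submatrix, Fin.succAbove]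
  ring

theorem dim4_combination_rank_four (a1 a2 a3 : ℝ)
    (h : (a1 ≠ 0 ∧ a2 ≠ 0) ∨ (a1 ≠ 0 ∧ a3 ≠ 0) ∨ (a2 ≠ 0 ∧ a3 ≠ 0)) :
    (a1 • W1 + a2 • W2 + a3 • W3).rank = 4 := by
  rw [Mlit]
  set L := Matrix.of ![![a1,a2,0,0], ![0,a1,0,0], ![0,a3,a2,0], ![a3,a3,a3,a1], ![0,0,0,a3]]
    with hL
  rcases h with ⟨h1, h2⟩ | ⟨h1, h3⟩ | ⟨h2, h3⟩
  · -- rows 0,1,2,3 : det = a1^3 a2 (sign aside)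
    apply rank_eq_four_of_minor L !![1,0,0,0,0; 0,1,0,0,0; 0,0,1,0,0; 0,0,0,1,0]
    have e : (!![1,0,0,0,0; 0,1,0,0,0; 0,0,1,0,0; 0,0,0,1,0] : Matrix (Fin 4) (Fin 5) ℝ) * L
        = !![a1,a2,0,0; 0,a1,0,0; 0,a3,a2,0; a3,a3,a3,a1] := by
      ext i j
      fin_cases i <;> fin_cases j <;> norm_num [hL, Matrix.mul_apply, Fin.sum_univ_succ]
    rw [e, det4]
    simp
    exact ⟨h1, h2, h1⟩
  · -- rows 0,1,3,4 : det = a1^2 a3^2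
    apply rank_eq_four_of_minor L !![1,0,0,0,0; 0,1,0,0,0; 0,0,0,1,0; 0,0,0,0,1]
    have e : (!![1,0,0,0,0; 0,1,0,0,0; 0,0,0,1,0; 0,0,0,0,1] : Matrix (Fin 4) (Fin 5) ℝ) * L
        = !![a1,a2,0,0; 0,a1,0,0; a3,a3,a3,a1; 0,0,0,a3] := by
      ext i j
      fin_cases i <;> fin_cases j <;> norm_num [hL, Matrix.mul_apply, Fin.sum_univ_succ]
    rw [e, det4]
    simp
    exact ⟨h1, h3⟩
  · -- rows 0,2,3,4, case split on a1
    by_cases h1 : a1 = 0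
    · apply rank_eq_four_of_minor L !![1,0,0,0,0; 0,0,1,0,0; 0,0,0,1,0; 0,0,0,0,1]
      have e : (!![1,0,0,0,0; 0,0,1,0,0; 0,0,0,1,0; 0,0,0,0,1] : Matrix (Fin 4) (Fin 5) ℝ) * L
          = !![a1,a2,0,0; 0,a3,a2,0; a3,a3,a3,a1; 0,0,0,a3] := by
        ext i j
        fin_cases i <;> fin_cases j <;> norm_num [hL, Matrix.mul_apply, Fin.sum_univ_succ]
      rw [e, det4, h1]
      simp
      exact ⟨h2, h3⟩
    · -- a1 ≠ 0, a3 ≠ 0: reuse second minor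
      apply rank_eq_four_of_minor L !![1,0,0,0,0; 0,1,0,0,0; 0,0,0,1,0; 0,0,0,0,1]
      have e : (!![1,0,0,0,0; 0,1,0,0,0; 0,0,0,1,0; 0,0,0,0,1] : Matrix (Fin 4) (Fin 5) ℝ) * L
          = !![a1,a2,0,0; 0,a1,0,0; a3,a3,a3,a1; 0,0,0,a3] := by
        ext i j
        fin_cases i <;> fin_cases j <;> norm_num [hL, Matrix.mul_apply, Fin.sum_univ_succ]
      rw [e, det4]
      simp
      exact ⟨h1, h3⟩
end
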